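/- Let H be a finite connected cograph. Then H is a retract of every finite cograph G that contains H as an induced subgraph and satisfies ω(G) = ω(H), if and only if every vertex of H is contained in a clique of H of cardinality ω(H). -/

import Mathlib

/-- `H` is a retract of `G`: there are homomorphisms `ρ : G → H` (retraction) and
`γ : H → G` (co-retraction) with `ρ ∘ γ = id`. -/
def SimpleGraph.IsRetract {α β : Type*} (G : SimpleGraph α) (H : SimpleGraph β) : Prop :=
  ∃ (ρ : G →g H) (γ : H →g G), ∀ v, ρ (γ v) = v

/-- A cograph: a simple graph with no induced subgraph isomorphic to the path `P₄`
on four vertices. -/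
def SimpleGraph.IsCograph {α : Type*} (G : SimpleGraph α) : Prop :=
  IsEmpty (SimpleGraph.pathGraph 4 ↪g G)

/-!
Cographs are built from single vertices by disjoint unions and joins (Seinsche), and the
decomposition restricts to every vertex set. Along it one retracts `G` onto a copy `S` of `H`
with `ω(G) = ω(S)` whose vertices all lie in maximum cliques of `S`: on a join both sides keep
their clique numbers and retract separately; on a disjoint union no maximum clique of `S`
crosses between the sides, so a side meeting `S` retracts onto its part of `S`, while a side
missing `S` is coloured into a maximum clique of `S` (cographs satisfy `χ = ω`).

Conversely, if `v` lies in no maximum clique of `H`, adding a true twin of `v` gives a cograph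
`G` with `ω(G) = ω(H)`. A retraction `G → H` fixes a copy of `H` that misses a single vertex `w`
and sends `w` to a non-neighbour dominating it, so `w` has no true twin and `H ≅ G - w` has fewer
distinct closed neighbourhoods than `G`; but adding a twin does not change their number.
-/

open Finset

theorem Function.Injective.exists_range_eq_compl_singleton {β : Type*} [Finite β]
    {g : β → Option β} (hg : Function.Injective g) : ∃ w, Set.range g = {w}ᶜ := by
  have h := Set.ncard_add_ncard_compl (Set.range g)
  rw [Set.ncard_range_of_injective hg, Finite.card_option] at h
  obtain ⟨w, hw⟩ := Set.ncard_eq_one.mp (by omega : (Set.range g)ᶜ.ncard = 1)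
  exact ⟨w, by rw [← compl_compl (Set.range g), hw]⟩

namespace SimpleGraph

variable {V β γ : Type*} {G : SimpleGraph V}

section Cograph

theorem ne_of_induced_path {a b c d : V} (hab : G.Adj a b) (hcd : G.Adj c d)
    (had : ¬G.Adj a d) (hbd : ¬G.Adj b d) : a ≠ c ∧ a ≠ d ∧ b ≠ d := by
  refine ⟨?_, ?_, ?_⟩ <;> rintro rfl
  exacts [had hcd, hbd hab.symm, had hab]

theorem isCograph_iff : G.IsCograph ↔ ∀ a b c d, G.Adj a b → G.Adj b c → G.Adj c d →
    ¬G.Adj a c → ¬G.Adj a d → ¬G.Adj b d → False := by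
  constructor
  · intro h a b c d hab hbc hcd hac had hbd
    obtain ⟨hac', had', hbd'⟩ := ne_of_induced_path hab hcd had hbd
    refine h.false ⟨⟨![a, b, c, d], fun i j hij => ?_⟩, fun {i j} => ?_⟩
    · fin_cases i <;> fin_cases j <;> simp_all [hab.ne, hbc.ne, hcd.ne, eq_comm]
    · change G.Adj (![a, b, c, d] i) (![a, b, c, d] j) ↔ _
      fin_cases i <;> fin_cases j <;> simp_all [pathGraph_adj, adj_comm]
  · intro h
    refine ⟨fun e => h (e 0) (e 1) (e 2) (e 3) ?_ ?_ ?_ ?_ ?_ ?_⟩ <;>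
      simp [e.map_adj_iff, pathGraph_adj]

theorem IsCograph.compl (hG : G.IsCograph) : Gᶜ.IsCograph := by
  rw [isCograph_iff] at hG ⊢
  intro a b c d hab hbc hcd hac had hbd
  obtain ⟨hac', had', hbd'⟩ := ne_of_induced_path hab hcd had hbd
  simp only [compl_adj, not_and, not_not] at *
  exact hG b d a c (hbd hbd') (had had').symm (hac hac') (fun h => hab.2 h.symm) hbc.2
    (fun h => hcd.2 h.symm)

def IsAnticompleteBetween (G : SimpleGraph V) (s t : Set V) : Prop :=
  ∀ ⦃v₁⦄, v₁ ∈ s → ∀ ⦃v₂⦄, v₂ ∈ t → ¬G.Adj v₁ v₂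

theorem IsAnticompleteBetween.symm {s t : Set V} (h : G.IsAnticompleteBetween s t) :
    G.IsAnticompleteBetween t s :=
  fun _ h₁ _ h₂ hadj => h h₂ h₁ hadj.symm

def IsUnionOrJoin (G : SimpleGraph V) (t₁ t₂ : Finset V) : Prop :=
  Disjoint t₁ t₂ ∧ (G.IsAnticompleteBetween t₁ t₂ ∨ G.IsCompleteBetween t₁ t₂)

theorem isUnionOrJoin_compl {t₁ t₂ : Finset V} :
    Gᶜ.IsUnionOrJoin t₁ t₂ ↔ G.IsUnionOrJoin t₁ t₂ := by
  refine and_congr_right fun hd => ?_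
  have hne : ∀ ⦃a⦄, a ∈ t₁ → ∀ ⦃b⦄, b ∈ t₂ → a ≠ b := fun a ha b hb h =>
    Finset.disjoint_left.mp hd ha (h ▸ hb)
  simp only [IsAnticompleteBetween, IsCompleteBetween, compl_adj, mem_coe]
  constructor <;> rintro (h | h)
  · exact Or.inr fun a ha b hb => by simpa [hne ha hb] using h ha hb
  · exact Or.inl fun a ha b hb => (h ha hb).2
  · exact Or.inr fun a ha b hb => ⟨hne ha hb, h ha hb⟩
  · exact Or.inl fun a ha b hb h' => h'.2 (h ha hb)

theorem IsCograph.not_adj_of_adj_both_sides (hG : G.IsCograph) {s₁ s₂ : Set V} {x a₁ a₂ z u : V}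
    (ha : G.IsAnticompleteBetween s₁ s₂) (ha₁ : a₁ ∈ s₁) (ha₂ : a₂ ∈ s₂) (hxa₁ : G.Adj x a₁)
    (hxa₂ : G.Adj x a₂) (hz : z ∈ s₁ ∪ s₂) (hu : u ∈ s₁ ∪ s₂) (hxz : ¬G.Adj x z)
    (hxu : G.Adj x u) : ¬G.Adj z u := by
  intro hzu
  -- With `a` a neighbour of `x` on the other side, `z - u - x - a` would be an induced path.
  have hpath : ∀ a, G.Adj x a → ¬G.Adj z a → ¬G.Adj u a → False := fun a hxa hza hua =>
    (isCograph_iff.mp hG) z u x a hzu hxu.symm hxa (fun h => hxz h.symm) hza hua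
  rcases hz with hz | hz <;> rcases hu with hu | hu
  · exact hpath a₂ hxa₂ (ha hz ha₂) (ha hu ha₂)
  · exact ha hz hu hzu
  · exact ha hu hz hzu.symm
  · exact hpath a₁ hxa₁ (ha.symm hz ha₁) (ha.symm hu ha₁)

theorem IsCograph.exists_isUnionOrJoin_insert [DecidableEq V] (hG : G.IsCograph)
    {s₁ s₂ : Finset V} {x : V} (hd : Disjoint s₁ s₂) (ha : G.IsAnticompleteBetween s₁ s₂)
    (h₁ : s₁.Nonempty) (h₂ : s₂.Nonempty) (hx : x ∉ s₁ ∪ s₂) :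
    ∃ t₁ t₂ : Finset V, t₁.Nonempty ∧ t₂.Nonempty ∧ t₁ ∪ t₂ = insert x (s₁ ∪ s₂) ∧
      G.IsUnionOrJoin t₁ t₂ := by
  have hx₁ : x ∉ s₁ := fun h => hx (mem_union_left _ h)
  have hx₂ : x ∉ s₂ := fun h => hx (mem_union_right _ h)
  by_cases hn₂ : ∃ a₂ ∈ s₂, G.Adj x a₂
  swap
  · simp only [not_exists, not_and] at hn₂
    refine ⟨insert x s₁, s₂, insert_nonempty _ _, h₂, insert_union _ _ _,
      disjoint_insert_left.mpr ⟨hx₂, hd⟩, Or.inl fun a ha' b hb => ?_⟩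
    rcases mem_insert.mp ha' with rfl | ha'
    exacts [hn₂ b hb, ha ha' hb]
  by_cases hn₁ : ∃ a₁ ∈ s₁, G.Adj x a₁
  swap
  · simp only [not_exists, not_and] at hn₁
    refine ⟨s₁, insert x s₂, h₁, insert_nonempty _ _, union_insert _ _ _,
      disjoint_insert_right.mpr ⟨hx₁, hd⟩, Or.inl fun a ha' b hb => ?_⟩
    rcases mem_insert.mp hb with rfl | hb
    exacts [fun h => hn₁ a ha' h.symm, ha ha' hb]
  obtain ⟨a₁, ha₁, hxa₁⟩ := hn₁
  obtain ⟨a₂, ha₂, hxa₂⟩ := hn₂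
  classical
  set M := (s₁ ∪ s₂).filter fun z => ¬G.Adj x z
  set N := (s₁ ∪ s₂).filter fun z => G.Adj x z
  rcases M.eq_empty_or_nonempty with hM | hM
  · have hall : ∀ z ∈ s₁ ∪ s₂, G.Adj x z := by simpa [M] using hM
    refine ⟨{x}, s₁ ∪ s₂, singleton_nonempty x, h₁.mono subset_union_left,
      (insert_eq x _).symm, disjoint_singleton_left.mpr hx, Or.inr fun a ha' b hb => ?_⟩
    rw [mem_coe, mem_singleton] at ha'
    exact ha' ▸ hall b hb
  refine ⟨M, insert x N, hM, insert_nonempty _ _, ?_, ?_, Or.inl fun z hz u hu hzu => ?_⟩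
  · rw [union_insert, union_comm M N, filter_union_filter_not_eq]
  · refine disjoint_insert_right.mpr ⟨fun h => hx (mem_filter.mp h).1, ?_⟩
    exact (disjoint_filter_filter_not _ _ _).symm
  · obtain ⟨hzs, hxz⟩ := mem_filter.mp hz
    rcases mem_insert.mp hu with rfl | hu
    · exact hxz hzu.symm
    obtain ⟨hus, hxu⟩ := mem_filter.mp hu
    rw [← mem_coe, coe_union] at hzs hus
    exact hG.not_adj_of_adj_both_sides ha ha₁ ha₂ hxa₁ hxa₂ hzs hus hxz hxu hzu

theorem IsCograph.exists_isUnionOrJoin [DecidableEq V] (hG : G.IsCograph) {t : Finset V}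
    (ht : 1 < #t) : ∃ t₁ t₂ : Finset V, t₁.Nonempty ∧ t₂.Nonempty ∧ t₁ ∪ t₂ = t ∧
      G.IsUnionOrJoin t₁ t₂ := by
  induction t using Finset.induction_on with
  | empty => simp at ht
  | insert x s hx ih =>
    rcases le_or_gt #s 1 with hs | hs
    · rw [card_insert_of_notMem hx] at ht
      obtain ⟨y, rfl⟩ := card_eq_one.mp (by omega : #s = 1)
      have hxy : x ≠ y := fun h => hx (h ▸ mem_singleton_self x)
      refine ⟨{x}, {y}, singleton_nonempty x, singleton_nonempty y, (insert_eq x _).symm,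
        disjoint_singleton.mpr hxy, ?_⟩
      by_cases hadj : G.Adj x y
      · exact Or.inr (by simpa [IsCompleteBetween] using hadj)
      · exact Or.inl (by simpa [IsAnticompleteBetween] using hadj)
    obtain ⟨s₁, s₂, h₁, h₂, rfl, hd, ha | hc⟩ := ih hs
    · exact hG.exists_isUnionOrJoin_insert hd ha h₁ h₂ hx
    · obtain ⟨t₁, t₂, ht₁, ht₂, hu, hsplit⟩ := hG.compl.exists_isUnionOrJoin_insert hd
        (fun a ha b hb h => h.2 (hc ha hb)) h₁ h₂ hx
      exact ⟨t₁, t₂, ht₁, ht₂, hu, isUnionOrJoin_compl.mp hsplit⟩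

theorem IsCograph.induction_on [DecidableEq V] (hG : G.IsCograph) {P : Finset V → Prop}
    (t : Finset V) (subsingleton : ∀ t, #t ≤ 1 → P t)
    (union : ∀ t₁ t₂ : Finset V, Disjoint t₁ t₂ → G.IsAnticompleteBetween t₁ t₂ → P t₁ →
      P t₂ → P (t₁ ∪ t₂))
    (join : ∀ t₁ t₂ : Finset V, G.IsCompleteBetween t₁ t₂ → P t₁ → P t₂ → P (t₁ ∪ t₂)) :
    P t := by
  induction t using Finset.strongInduction with
  | H t ih =>
    rcases le_or_gt #t 1 with ht | ht
    · exact subsingleton t ht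
    obtain ⟨t₁, t₂, ⟨x₁, hx₁⟩, ⟨x₂, hx₂⟩, rfl, hd, hs⟩ := hG.exists_isUnionOrJoin ht
    have ih₁ := ih t₁ (left_lt_sup.mpr fun h => Finset.disjoint_left.mp hd (h hx₂) hx₂)
    have ih₂ := ih t₂ (right_lt_sup.mpr fun h => Finset.disjoint_left.mp hd hx₁ (h hx₁))
    rcases hs with ha | hc
    exacts [union t₁ t₂ hd ha ih₁ ih₂, join t₁ t₂ hc ih₁ ih₂]

end Cograph

section CliqueNumOn

open Classical in
noncomputable def cliqueNumOn (G : SimpleGraph V) (t : Finset V) : ℕ :=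
  (t.powerset.filter fun c : Finset V => G.IsClique (c : Set V)).sup card

theorem IsClique.card_le_cliqueNumOn {c t : Finset V} (hc : G.IsClique (c : Set V))
    (hct : c ⊆ t) : #c ≤ G.cliqueNumOn t := by
  classical
  exact le_sup (f := card) (mem_filter.mpr ⟨mem_powerset.mpr hct, hc⟩)

theorem exists_isNClique_cliqueNumOn (G : SimpleGraph V) (t : Finset V) :
    ∃ c ⊆ t, G.IsNClique (G.cliqueNumOn t) c := by
  classical
  obtain ⟨c, hc, hcard⟩ := exists_mem_eq_sup (t.powerset.filter fun c : Finset V => G.IsClique c)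
    ⟨∅, mem_filter.mpr ⟨empty_mem_powerset t, by simp⟩⟩ card
  rw [mem_filter, mem_powerset] at hc
  exact ⟨c, hc.1, hc.2, hcard.symm⟩

theorem cliqueNumOn_mono {s t : Finset V} (h : s ⊆ t) : G.cliqueNumOn s ≤ G.cliqueNumOn t := by
  obtain ⟨c, hcs, hc⟩ := G.exists_isNClique_cliqueNumOn s
  exact hc.card_eq ▸ hc.isClique.card_le_cliqueNumOn (hcs.trans h)

theorem cliqueNumOn_le_card (t : Finset V) : G.cliqueNumOn t ≤ #t := by
  obtain ⟨c, hct, hc⟩ := G.exists_isNClique_cliqueNumOn t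
  exact hc.card_eq ▸ card_le_card hct

theorem cliqueNumOn_pos {t : Finset V} (ht : t.Nonempty) : 0 < G.cliqueNumOn t := by
  obtain ⟨x, hx⟩ := ht
  have hx' : G.IsClique (({x} : Finset V) : Set V) := by simp
  exact hx'.card_le_cliqueNumOn (singleton_subset_iff.mpr hx)

theorem cliqueNumOn_union_of_isCompleteBetween [DecidableEq V] {t₁ t₂ : Finset V}
    (h : G.IsCompleteBetween t₁ t₂) :
    G.cliqueNumOn (t₁ ∪ t₂) = G.cliqueNumOn t₁ + G.cliqueNumOn t₂ := by
  apply le_antisymm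
  · obtain ⟨c, hct, hc⟩ := G.exists_isNClique_cliqueNumOn (t₁ ∪ t₂)
    rw [← hc.card_eq, ← card_inter_add_card_sdiff c t₁]
    gcongr
    · exact (hc.isClique.subset (by simp)).card_le_cliqueNumOn inter_subset_right
    · refine (hc.isClique.subset (by simp)).card_le_cliqueNumOn fun x hx => ?_
      rw [mem_sdiff] at hx
      exact (mem_union.mp (hct hx.1)).resolve_left hx.2
  · obtain ⟨c₁, hc₁t, hc₁⟩ := G.exists_isNClique_cliqueNumOn t₁
    obtain ⟨c₂, hc₂t, hc₂⟩ := G.exists_isNClique_cliqueNumOn t₂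
    have hcl : G.IsClique (c₁ ∪ c₂ : Finset V) := by
      rw [coe_union]
      exact Set.pairwise_union.mpr ⟨hc₁.isClique, hc₂.isClique, fun a ha b hb _ =>
        ⟨h (hc₁t ha) (hc₂t hb), (h (hc₁t ha) (hc₂t hb)).symm⟩⟩
    have hd : Disjoint c₁ c₂ := disjoint_coe.mp (h.disjoint.mono hc₁t hc₂t)
    rw [← hc₁.card_eq, ← hc₂.card_eq, ← card_union_of_disjoint hd]
    exact hcl.card_le_cliqueNumOn (union_subset_union hc₁t hc₂t)

theorem IsClique.subset_of_isAnticompleteBetween [DecidableEq V] {c t₁ t₂ : Finset V} {v : V}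
    (hc : G.IsClique (c : Set V)) (hct : c ⊆ t₁ ∪ t₂) (ha : G.IsAnticompleteBetween t₁ t₂)
    (hv : v ∈ c) (hv₁ : v ∈ t₁) : c ⊆ t₁ := by
  intro z hz
  by_contra hz₁
  exact ha hv₁ ((mem_union.mp (hct hz)).resolve_left hz₁) (hc hv hz fun h => hz₁ (h ▸ hv₁))

theorem Embedding.isClique_map_iff {H : SimpleGraph β} (f : H ↪g G) {s : Finset β} :
    G.IsClique (s.map f.toEmbedding : Set V) ↔ H.IsClique (s : Set β) := by
  simp [IsClique, Set.Pairwise]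

theorem Embedding.cliqueNumOn_map {H : SimpleGraph β} (f : H ↪g G) (s : Finset β) :
    G.cliqueNumOn (s.map f.toEmbedding) = H.cliqueNumOn s := by
  apply le_antisymm
  · obtain ⟨c, hcs, hc⟩ := G.exists_isNClique_cliqueNumOn (s.map f.toEmbedding)
    obtain ⟨d, hds, rfl⟩ := subset_map_iff.mp hcs
    rw [← hc.card_eq, card_map]
    exact (f.isClique_map_iff.mp hc.isClique).card_le_cliqueNumOn hds
  · obtain ⟨d, hds, hd⟩ := H.exists_isNClique_cliqueNumOn s
    rw [← hd.card_eq, ← card_map f.toEmbedding]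
    exact (f.isClique_map_iff.mpr hd.isClique).card_le_cliqueNumOn (map_subset_map.mpr hds)

theorem cliqueNumOn_univ [Fintype V] : G.cliqueNumOn univ = G.cliqueNum := by
  apply le_antisymm
  · obtain ⟨c, -, hc⟩ := G.exists_isNClique_cliqueNumOn univ
    exact hc.card_eq ▸ hc.isClique.card_le_cliqueNum
  · obtain ⟨c, hc⟩ := G.exists_isNClique_cliqueNum
    exact hc.card_eq ▸ hc.isClique.card_le_cliqueNumOn (subset_univ c)

theorem Embedding.cliqueNumOn_map_univ [Fintype β] {H : SimpleGraph β} (f : H ↪g G) :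
    G.cliqueNumOn (univ.map f.toEmbedding) = H.cliqueNum := by
  rw [f.cliqueNumOn_map, cliqueNumOn_univ]

theorem Embedding.cliqueNum_le [Fintype V] [Fintype β] {H : SimpleGraph β} (f : H ↪g G) :
    H.cliqueNum ≤ G.cliqueNum :=
  f.cliqueNumOn_map_univ ▸ cliqueNumOn_univ (G := G) ▸ cliqueNumOn_mono (subset_univ _)

def IsCoveredByMaximumCliques (G : SimpleGraph V) (s : Finset V) : Prop :=
  ∀ v ∈ s, ∃ c ⊆ s, v ∈ c ∧ G.IsNClique (G.cliqueNumOn s) c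

theorem IsCoveredByMaximumCliques.inter [DecidableEq V] {s u : Finset V}
    (hs : G.IsCoveredByMaximumCliques s)
    (hu : ∀ c ⊆ s, G.IsClique (c : Set V) → ∀ v ∈ c, v ∈ u → c ⊆ u) (hne : (s ∩ u).Nonempty) :
    G.IsCoveredByMaximumCliques (s ∩ u) ∧ G.cliqueNumOn (s ∩ u) = G.cliqueNumOn s := by
  have hcov : ∀ v ∈ s ∩ u, ∃ c ⊆ s ∩ u, v ∈ c ∧ G.IsNClique (G.cliqueNumOn s) c := by
    intro v hv
    obtain ⟨c, hcs, hvc, hc⟩ := hs v (mem_inter.mp hv).1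
    exact ⟨c, subset_inter hcs (hu c hcs hc.isClique v hvc (mem_inter.mp hv).2), hvc, hc⟩
  have heq : G.cliqueNumOn (s ∩ u) = G.cliqueNumOn s := by
    obtain ⟨v, hv⟩ := hne
    obtain ⟨c, hcsu, -, hc⟩ := hcov v hv
    exact le_antisymm (cliqueNumOn_mono inter_subset_left)
      (hc.card_eq ▸ hc.isClique.card_le_cliqueNumOn hcsu)
  exact ⟨fun v hv => heq ▸ hcov v hv, heq⟩

theorem cliqueNumOn_eq_add_of_isCompleteBetween [DecidableEq V] {s t₁ t₂ : Finset V}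
    (hc : G.IsCompleteBetween t₁ t₂) (hst : s ⊆ t₁ ∪ t₂) :
    G.cliqueNumOn s = G.cliqueNumOn (s ∩ t₁) + G.cliqueNumOn (s ∩ t₂) := by
  conv_lhs => rw [← inter_eq_left.mpr hst, inter_union_distrib_left]
  exact cliqueNumOn_union_of_isCompleteBetween fun a ha b hb =>
    hc (mem_inter.mp ha).2 (mem_inter.mp hb).2

theorem IsCoveredByMaximumCliques.inter_of_isCompleteBetween [DecidableEq V]
    {s t₁ t₂ : Finset V} (hs : G.IsCoveredByMaximumCliques s) (hst : s ⊆ t₁ ∪ t₂)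
    (hc : G.IsCompleteBetween t₁ t₂) : G.IsCoveredByMaximumCliques (s ∩ t₁) := by
  intro v hv
  obtain ⟨c, hcs, hvc, hcl⟩ := hs v (mem_inter.mp hv).1
  have h₁ : #(c ∩ t₁) ≤ G.cliqueNumOn (s ∩ t₁) :=
    (hcl.isClique.subset (by simp)).card_le_cliqueNumOn (inter_subset_inter_right hcs)
  have h₂ : #(c \ t₁) ≤ G.cliqueNumOn (s ∩ t₂) := by
    refine (hcl.isClique.subset (by simp)).card_le_cliqueNumOn fun x hx => ?_
    rw [mem_sdiff] at hx
    exact mem_inter.mpr ⟨hcs hx.1, (mem_union.mp (hst (hcs hx.1))).resolve_left hx.2⟩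
  have hsum := card_inter_add_card_sdiff c t₁
  rw [hcl.card_eq, cliqueNumOn_eq_add_of_isCompleteBetween hc hst] at hsum
  exact ⟨c ∩ t₁, inter_subset_inter_right hcs, mem_inter.mpr ⟨hvc, (mem_inter.mp hv).2⟩,
    hcl.isClique.subset (by simp), by omega⟩

end CliqueNumOn

section Retraction

def IsHomOn (G : SimpleGraph V) (f : V → V) (t u : Finset V) : Prop :=
  (∀ x ∈ t, f x ∈ u) ∧ ∀ x ∈ t, ∀ y ∈ t, G.Adj x y → G.Adj (f x) (f y)

def IsRetractionOn (G : SimpleGraph V) (r : V → V) (t s : Finset V) : Prop :=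
  G.IsHomOn r t s ∧ ∀ x ∈ s, r x = x

theorem IsHomOn.mono_right {f : V → V} {t u u' : Finset V} (h : G.IsHomOn f t u)
    (hu : u ⊆ u') : G.IsHomOn f t u' :=
  ⟨fun x hx => hu (h.1 x hx), h.2⟩

theorem IsHomOn.piecewise [DecidableEq V] {f₁ f₂ : V → V} {t₁ t₂ u : Finset V}
    (h₁ : G.IsHomOn f₁ t₁ u) (h₂ : G.IsHomOn f₂ t₂ u) (hd : Disjoint t₁ t₂)
    (hcross : ∀ a ∈ t₁, ∀ b ∈ t₂, G.Adj a b → G.Adj (f₁ a) (f₂ b)) :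
    G.IsHomOn (t₁.piecewise f₁ f₂) (t₁ ∪ t₂) u := by
  have hval : ∀ x ∈ t₂, t₁.piecewise f₁ f₂ x = f₂ x := fun x hx =>
    piecewise_eq_of_notMem _ _ _ (disjoint_right.mp hd hx)
  refine ⟨fun x hx => ?_, fun x hx y hy hxy => ?_⟩
  · rcases mem_union.mp hx with hx | hx
    · rw [piecewise_eq_of_mem _ _ _ hx]; exact h₁.1 x hx
    · rw [hval x hx]; exact h₂.1 x hx
  · rcases mem_union.mp hx with hx | hx <;> rcases mem_union.mp hy with hy | hy
    · simpa only [piecewise_eq_of_mem _ _ _ hx, piecewise_eq_of_mem _ _ _ hy] using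
        h₁.2 x hx y hy hxy
    · rw [piecewise_eq_of_mem _ _ _ hx, hval y hy]; exact hcross x hx y hy hxy
    · rw [hval x hx, piecewise_eq_of_mem _ _ _ hy]; exact (hcross y hy x hx hxy.symm).symm
    · rw [hval x hx, hval y hy]; exact h₂.2 x hx y hy hxy

theorem piecewise_eq_self [DecidableEq V] {f₁ f₂ : V → V} {s t₁ t₂ : Finset V}
    (hs : s ⊆ t₁ ∪ t₂) (h₁ : ∀ x ∈ s ∩ t₁, f₁ x = x) (h₂ : ∀ x ∈ s ∩ t₂, f₂ x = x) :
    ∀ x ∈ s, t₁.piecewise f₁ f₂ x = x := by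
  intro x hx
  by_cases hx₁ : x ∈ t₁
  · rw [piecewise_eq_of_mem _ _ _ hx₁, h₁ x (mem_inter.mpr ⟨hx, hx₁⟩)]
  · rw [piecewise_eq_of_notMem _ _ _ hx₁,
      h₂ x (mem_inter.mpr ⟨hx, (mem_union.mp (hs hx)).resolve_left hx₁⟩)]

theorem IsCograph.exists_isHomOn_of_cliqueNumOn_le [DecidableEq V] (hG : G.IsCograph)
    (t : Finset V) {K : Finset V} (hK : G.IsClique (K : Set V)) (hω : G.cliqueNumOn t ≤ #K) :
    ∃ f, G.IsHomOn f t K := by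
  induction t using hG.induction_on generalizing K with
  | subsingleton t ht =>
    rcases t.eq_empty_or_nonempty with rfl | htne
    · exact ⟨id, by simp [IsHomOn]⟩
    obtain ⟨k, hk⟩ := card_pos.mp ((cliqueNumOn_pos htne).trans_le hω)
    exact ⟨fun _ => k, fun _ _ => hk, fun x hx y hy hxy =>
      (G.ne_of_adj hxy (card_le_one.mp ht x hx y hy)).elim⟩
  | union t₁ t₂ hd ha ih₁ ih₂ =>
    obtain ⟨f₁, hf₁⟩ := ih₁ hK ((cliqueNumOn_mono subset_union_left).trans hω)
    obtain ⟨f₂, hf₂⟩ := ih₂ hK ((cliqueNumOn_mono subset_union_right).trans hω)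
    exact ⟨_, hf₁.piecewise hf₂ hd fun a ha' b hb h => (ha ha' hb h).elim⟩
  | join t₁ t₂ hc ih₁ ih₂ =>
    rw [cliqueNumOn_union_of_isCompleteBetween hc] at hω
    obtain ⟨K₁, hK₁, hK₁card⟩ := exists_subset_card_eq (le_of_add_le_left hω)
    obtain ⟨f₁, hf₁⟩ := ih₁ (hK.subset (coe_subset.mpr hK₁)) hK₁card.ge
    obtain ⟨f₂, hf₂⟩ := ih₂ (hK.subset (coe_subset.mpr sdiff_subset))
      (by rw [card_sdiff_of_subset hK₁]; omega)
    refine ⟨_, (hf₁.mono_right hK₁).piecewise (hf₂.mono_right sdiff_subset)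
      (disjoint_coe.mp hc.disjoint) fun a ha b hb _ => ?_⟩
    have h₁ := hf₁.1 a ha
    have h₂ := mem_sdiff.mp (hf₂.1 b hb)
    exact hK (hK₁ h₁) h₂.1 fun h => h₂.2 (h ▸ h₁)

theorem IsCograph.exists_isHomOn_fixing_inter [DecidableEq V] (hG : G.IsCograph)
    {s u : Finset V} (hω : G.cliqueNumOn u ≤ G.cliqueNumOn s)
    (hs : G.IsCoveredByMaximumCliques s)
    (hu : ∀ c ⊆ s, G.IsClique (c : Set V) → ∀ v ∈ c, v ∈ u → c ⊆ u)
    (hretract : ∀ s' ⊆ u, G.cliqueNumOn u ≤ G.cliqueNumOn s' → G.IsCoveredByMaximumCliques s' →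
      ∃ r, G.IsRetractionOn r u s') :
    ∃ r, G.IsHomOn r u s ∧ ∀ x ∈ s ∩ u, r x = x := by
  by_cases hne : (s ∩ u).Nonempty
  · obtain ⟨hcov, hcw⟩ := hs.inter hu hne
    obtain ⟨r, hr, hfix⟩ := hretract (s ∩ u) inter_subset_right (hcw ▸ hω) hcov
    exact ⟨r, hr.mono_right inter_subset_left, hfix⟩
  · obtain ⟨K, hKs, hK⟩ := G.exists_isNClique_cliqueNumOn s
    obtain ⟨f, hf⟩ := hG.exists_isHomOn_of_cliqueNumOn_le u hK.isClique (hK.card_eq ▸ hω)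
    exact ⟨f, hf.mono_right hKs, fun x hx => (hne ⟨x, hx⟩).elim⟩

theorem IsCograph.exists_isRetractionOn [DecidableEq V] (hG : G.IsCograph) {s t : Finset V}
    (hst : s ⊆ t) (hω : G.cliqueNumOn t ≤ G.cliqueNumOn s)
    (hs : G.IsCoveredByMaximumCliques s) : ∃ r, G.IsRetractionOn r t s := by
  induction t using hG.induction_on generalizing s with
  | subsingleton t ht =>
    obtain rfl : s = t := eq_of_subset_of_card_le hst <| by
      rcases t.eq_empty_or_nonempty with rfl | htne
      · simp
      · exact ht.trans ((cliqueNumOn_pos htne).trans_le (hω.trans (cliqueNumOn_le_card s)))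
    exact ⟨id, ⟨fun x hx => hx, fun _ _ _ _ h => h⟩, fun _ _ => rfl⟩
  | union t₁ t₂ hd ha ih₁ ih₂ =>
    obtain ⟨r₁, hr₁, hfix₁⟩ := hG.exists_isHomOn_fixing_inter
      ((cliqueNumOn_mono subset_union_left).trans hω) hs
      (fun c hc hcl v hv hv₁ => hcl.subset_of_isAnticompleteBetween (hc.trans hst) ha hv hv₁)
      fun _ => ih₁
    obtain ⟨r₂, hr₂, hfix₂⟩ := hG.exists_isHomOn_fixing_inter
      ((cliqueNumOn_mono subset_union_right).trans hω) hs
      (fun c hc hcl v hv hv₂ => hcl.subset_of_isAnticompleteBetween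
        (union_comm t₁ t₂ ▸ hc.trans hst) ha.symm hv hv₂)
      fun _ => ih₂
    exact ⟨_, hr₁.piecewise hr₂ hd (fun a ha' b hb h => (ha ha' hb h).elim),
      piecewise_eq_self hst hfix₁ hfix₂⟩
  | join t₁ t₂ hc ih₁ ih₂ =>
    have hst' : s ⊆ t₂ ∪ t₁ := union_comm t₁ t₂ ▸ hst
    have hsum := cliqueNumOn_eq_add_of_isCompleteBetween hc hst
    rw [cliqueNumOn_union_of_isCompleteBetween hc] at hω
    have hle₁ := cliqueNumOn_mono (G := G) (inter_subset_right : s ∩ t₁ ⊆ t₁)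
    have hle₂ := cliqueNumOn_mono (G := G) (inter_subset_right : s ∩ t₂ ⊆ t₂)
    obtain ⟨r₁, hr₁, hfix₁⟩ := ih₁ inter_subset_right (by omega)
      (hs.inter_of_isCompleteBetween hst hc)
    obtain ⟨r₂, hr₂, hfix₂⟩ := ih₂ inter_subset_right (by omega)
      (hs.inter_of_isCompleteBetween hst' hc.symm)
    refine ⟨_, (hr₁.mono_right inter_subset_left).piecewise (hr₂.mono_right inter_subset_left)
      (disjoint_coe.mp hc.disjoint) fun a ha b hb _ => hc (mem_inter.mp (hr₁.1 a ha)).2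
        (mem_inter.mp (hr₂.1 b hb)).2, piecewise_eq_self hst hfix₁ hfix₂⟩

theorem isRetract_of_isRetractionOn [Fintype V] [Fintype β] {H : SimpleGraph β} (f : H ↪g G)
    {r : V → V} (hr : G.IsRetractionOn r univ (univ.map f.toEmbedding)) : G.IsRetract H := by
  have hmem : ∀ x, ∃ b, f b = r x := fun x => by simpa using hr.1.1 x (mem_univ x)
  choose g hg using hmem
  refine ⟨⟨g, fun {x y} hxy => ?_⟩, f.toHom, fun b => f.injective ?_⟩
  · rw [← f.map_adj_iff, hg, hg]
    exact hr.1.2 x (mem_univ _) y (mem_univ _) hxy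
  · change f (g (f b)) = f b
    rw [hg]
    exact hr.2 _ (by simp)

theorem IsCograph.isRetract [Fintype V] [Fintype β] (hG : G.IsCograph) {H : SimpleGraph β}
    (f : H ↪g G) (hω : G.cliqueNum = H.cliqueNum)
    (hH : ∀ b, ∃ s : Finset β, b ∈ s ∧ H.IsNClique H.cliqueNum s) : G.IsRetract H := by
  classical
  have hS := f.cliqueNumOn_map_univ
  have hcov : G.IsCoveredByMaximumCliques (univ.map f.toEmbedding) := by
    intro x hx
    obtain ⟨b, -, rfl⟩ := mem_map.mp hx
    obtain ⟨s, hbs, hs⟩ := hH b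
    refine ⟨s.map f.toEmbedding, map_subset_map.mpr (subset_univ s), mem_map_of_mem _ hbs, ?_⟩
    rw [hS]
    exact ⟨f.isClique_map_iff.mpr hs.isClique, by rw [card_map, hs.card_eq]⟩
  obtain ⟨r, hr⟩ := hG.exists_isRetractionOn (subset_univ _)
    (by rw [cliqueNumOn_univ, hS, hω]) hcov
  exact isRetract_of_isRetractionOn f hr

end Retraction

section TrueTwin

/-- Each fibre of `f` becomes a clique of true twins. -/
def blowup (H : SimpleGraph β) (f : γ → β) : SimpleGraph γ where
  Adj x y := x ≠ y ∧ (f x = f y ∨ H.Adj (f x) (f y))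
  symm := ⟨fun _ _ h => ⟨h.1.symm, h.2.imp Eq.symm H.adj_symm⟩⟩
  loopless := ⟨fun _ h => h.1 rfl⟩

theorem blowup_adj {H : SimpleGraph β} {f : γ → β} {x y : γ} :
    (H.blowup f).Adj x y ↔ x ≠ y ∧ (f x = f y ∨ H.Adj (f x) (f y)) := Iff.rfl

theorem IsCograph.blowup {H : SimpleGraph β} (hH : H.IsCograph) (f : γ → β) :
    (H.blowup f).IsCograph := by
  rw [isCograph_iff] at hH ⊢
  intro a b c d hab hbc hcd hac had hbd
  obtain ⟨hac', had', hbd'⟩ := ne_of_induced_path hab hcd had hbd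
  simp only [blowup_adj, ne_eq, not_and, not_or] at *
  obtain ⟨hac₁, hac₂⟩ := hac hac'
  obtain ⟨had₁, had₂⟩ := had had'
  obtain ⟨hbd₁, hbd₂⟩ := hbd hbd'
  have hab₁ : f a ≠ f b := fun h => by rw [← h] at hbc; exact hbc.2.elim hac₁ hac₂
  have hbc₁ : f b ≠ f c := fun h => by rw [h] at hab; exact hab.2.elim hac₁ hac₂
  have hcd₁ : f c ≠ f d := fun h => by rw [h] at hbc; exact hbc.2.elim hbd₁ hbd₂
  exact hH _ _ _ _ (hab.2.resolve_left hab₁) (hbc.2.resolve_left hbc₁)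
    (hcd.2.resolve_left hcd₁) hac₂ had₂ hbd₂

def closedNbhd (G : SimpleGraph V) (x : V) : Set V := insert x (G.neighborSet x)

/-- The number of true-twin classes of `G`. -/
noncomputable def numClosedNbhds (G : SimpleGraph V) : ℕ := (Set.range G.closedNbhd).ncard

theorem closedNbhd_blowup (H : SimpleGraph β) (f : γ → β) (x : γ) :
    (H.blowup f).closedNbhd x = f ⁻¹' H.closedNbhd (f x) := by
  ext z
  by_cases hz : z = x
  · simp [closedNbhd, hz]
  · simp [closedNbhd, hz, blowup_adj, Ne.symm hz, eq_comm]

theorem numClosedNbhds_blowup {H : SimpleGraph β} {f : γ → β} (hf : Function.Surjective f) :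
    (H.blowup f).numClosedNbhds = H.numClosedNbhds := by
  have hrange : Set.range (H.blowup f).closedNbhd = Set.preimage f '' Set.range H.closedNbhd := by
    rw [← hf.range_comp, ← Set.range_comp]
    exact congrArg Set.range (funext (closedNbhd_blowup H f))
  rw [numClosedNbhds, hrange, Set.ncard_image_of_injective _ (Set.preimage_injective.mpr hf),
    numClosedNbhds]

variable {H : SimpleGraph β} {ρ : G →g H} {ι : H →g G} {w : V}

theorem apply_apply_eq_self_of_range_eq (hρι : ∀ b, ρ (ι b) = b) (hw : Set.range ι = {w}ᶜ)
    {x : V} (hx : x ≠ w) : ι (ρ x) = x := by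
  obtain ⟨b, rfl⟩ : x ∈ Set.range ι := hw ▸ hx
  rw [hρι]

theorem closedNbhd_ne_of_range_eq (hρι : ∀ b, ρ (ι b) = b) (hw : Set.range ι = {w}ᶜ)
    {x : V} (hx : x ≠ w) : G.closedNbhd x ≠ G.closedNbhd w := by
  intro heq
  -- `y` is a non-neighbour of `w` adjacent to every neighbour of `w`.
  set y := ι (ρ w)
  have hyw : y ≠ w := by simpa [hw] using Set.mem_range_self (f := ι) (ρ w)
  have hwy : ¬G.Adj w y := fun h => H.irrefl (v := ρ w) (by simpa [y, hρι] using ρ.map_adj h)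
  have hwx : G.Adj w x := (heq ▸ Set.mem_insert x _ : x ∈ G.closedNbhd w).resolve_left hx
  have hyx : G.Adj y x := by
    simpa [apply_apply_eq_self_of_range_eq hρι hw hx] using ι.map_adj (ρ.map_adj hwx)
  exact (heq ▸ Or.inr hyx.symm : y ∈ G.closedNbhd w).elim hyw hwy

theorem image_closedNbhd_of_range_eq (hρι : ∀ b, ρ (ι b) = b) (hw : Set.range ι = {w}ᶜ)
    (b : β) : ι '' H.closedNbhd b = G.closedNbhd (ι b) \ {w} := by
  ext z
  constructor
  · rintro ⟨a, ha, rfl⟩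
    refine ⟨?_, by simpa [hw] using Set.mem_range_self (f := ι) a⟩
    rcases ha with rfl | ha
    exacts [Set.mem_insert _ _, Or.inr (ι.map_adj ha)]
  · rintro ⟨hz, hzw⟩
    refine ⟨ρ z, ?_, apply_apply_eq_self_of_range_eq hρι hw hzw⟩
    rcases hz with rfl | hz
    exacts [by simp [closedNbhd, hρι], Or.inr (by simpa [hρι] using ρ.map_adj hz)]

theorem numClosedNbhds_lt_of_range_eq [Finite V] (hρι : ∀ b, ρ (ι b) = b)
    (hw : Set.range ι = {w}ᶜ) : H.numClosedNbhds < G.numClosedNbhds := by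
  have hsub : Set.range (G.closedNbhd ∘ ι) ⊂ Set.range G.closedNbhd := by
    refine Set.ssubset_iff_subset_ne.mpr ⟨Set.range_comp_subset_range _ _, fun h => ?_⟩
    obtain ⟨b, hb⟩ : G.closedNbhd w ∈ Set.range (G.closedNbhd ∘ ι) := h ▸ Set.mem_range_self w
    exact closedNbhd_ne_of_range_eq hρι hw (by simpa [hw] using Set.mem_range_self (f := ι) b) hb
  calc H.numClosedNbhds = (Set.range fun b => ι '' H.closedNbhd b).ncard := by
        rw [Set.range_comp' (Set.image ι), Set.ncard_image_of_injective _
          (Set.image_injective.mpr (Function.LeftInverse.injective hρι)), numClosedNbhds]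
    _ = ((· \ {w}) '' Set.range (G.closedNbhd ∘ ι)).ncard := by
        simp_rw [image_closedNbhd_of_range_eq hρι hw, ← Set.range_comp]; rfl
    _ ≤ (Set.range (G.closedNbhd ∘ ι)).ncard := Set.ncard_image_le
    _ < G.numClosedNbhds := Set.ncard_lt_ncard hsub

/-- The new vertex `none` is a true twin of `v`. -/
def addTrueTwin (H : SimpleGraph β) (v : β) : SimpleGraph (Option β) :=
  H.blowup (Option.getD · v)

def Embedding.addTrueTwin (H : SimpleGraph β) (v : β) : H ↪g H.addTrueTwin v where
  toEmbedding := Function.Embedding.some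
  map_rel_iff' {a b} := by
    simp only [SimpleGraph.addTrueTwin, blowup_adj, Function.Embedding.some_apply, ne_eq,
      Option.some.injEq, Option.getD_some]
    exact ⟨fun h => h.2.resolve_left h.1, fun h => ⟨H.ne_of_adj h, Or.inr h⟩⟩

theorem not_isRetract_addTrueTwin [Finite β] (H : SimpleGraph β) (v : β) :
    ¬(H.addTrueTwin v).IsRetract H := by
  rintro ⟨ρ, ι, hρι⟩
  obtain ⟨w, hw⟩ := (Function.LeftInverse.injective hρι).exists_range_eq_compl_singleton
  have hsurj : Function.Surjective (Option.getD · v : Option β → β) := fun b => ⟨some b, rfl⟩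
  exact (numClosedNbhds_lt_of_range_eq hρι hw).ne (numClosedNbhds_blowup hsurj).symm

theorem cliqueNum_addTrueTwin [Fintype β] {H : SimpleGraph β} {v : β}
    (hv : ∀ s : Finset β, v ∈ s → ¬H.IsNClique H.cliqueNum s) :
    (H.addTrueTwin v).cliqueNum = H.cliqueNum := by
  classical
  refine le_antisymm ?_ (Embedding.addTrueTwin H v).cliqueNum_le
  obtain ⟨c, hc⟩ := (H.addTrueTwin v).exists_isNClique_cliqueNum
  rw [← hc.card_eq]
  set f : Option β → β := (Option.getD · v)
  have hcl : H.IsClique (c.image f : Set β) := by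
    intro a ha b hb hab
    obtain ⟨x, hx, rfl⟩ := mem_image.mp ha
    obtain ⟨y, hy, rfl⟩ := mem_image.mp hb
    exact (hc.isClique hx hy fun h => hab (h ▸ rfl)).2.resolve_left hab
  have hinj : #(c.erase none) ≤ #(c.image f) := by
    refine (card_image_of_injOn fun x hx y hy hxy => ?_).symm.le.trans
      (card_le_card (image_subset_image (erase_subset none c)))
    obtain ⟨a, rfl⟩ := Option.ne_none_iff_exists'.mp (mem_erase.mp hx).1
    obtain ⟨b, rfl⟩ := Option.ne_none_iff_exists'.mp (mem_erase.mp hy).1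
    exact congrArg some hxy
  by_cases hn : none ∈ c
  · have hlt : #(c.image f) < H.cliqueNum := hcl.card_le_cliqueNum.lt_of_ne fun h =>
      hv _ (mem_image_of_mem f hn) ⟨hcl, h⟩
    rw [← card_erase_add_one hn]
    omega
  · rw [erase_eq_of_notMem hn] at hinj
    exact hinj.trans hcl.card_le_cliqueNum

end TrueTwin

end SimpleGraph

theorem absolute_retract_cograph_iff_general {β : Type} [Fintype β]
    (H : SimpleGraph β) (hH : H.IsCograph) :
    (∀ (α : Type) (G : SimpleGraph α), Fintype α → G.IsCograph →
      Nonempty (H ↪g G) → G.cliqueNum = H.cliqueNum → G.IsRetract H) ↔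
    (∀ v : β, ∃ s : Finset β, v ∈ s ∧ H.IsNClique H.cliqueNum s) := by
  refine ⟨fun h v => ?_, fun h α G _ hG ⟨f⟩ hω => hG.isRetract f hω h⟩
  by_contra! hv
  exact H.not_isRetract_addTrueTwin v (h _ _ inferInstance (hH.blowup _)
    ⟨.addTrueTwin H v⟩ (SimpleGraph.cliqueNum_addTrueTwin hv))

/-- A finite connected cograph `H` is a retract of every finite cograph `G` containing `H`
as an induced subgraph with `ω(G) = ω(H)`, if and only if every vertex of `H` lies in a
clique of `H` of cardinality `ω(H)`. -/
theorem absolute_retract_cograph_iff {β : Type} [Fintype β]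
    (H : SimpleGraph β) (hH : H.IsCograph) (hHc : H.Connected) :
    (∀ (α : Type) (G : SimpleGraph α), Fintype α → G.IsCograph →
      Nonempty (H ↪g G) → G.cliqueNum = H.cliqueNum → G.IsRetract H) ↔
    (∀ v : β, ∃ s : Finset β, v ∈ s ∧ H.IsNClique H.cliqueNum s) :=
  absolute_retract_cograph_iff_general H hH
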